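/- Fix integers m, n, N, α, β ≥ 1. Let v_{i,k} ∈ ℂ^{mn} for 1 ≤ i ≤ N, 1 ≤ k ≤ α, and suppose Y = (Y_{ij})_{i,j=1}^{N} is the block matrix with Y_{ij} := Σ_{k=1}^{α} v_{i,k} v_{j,k}*, with induced product (A⋆B)_{ij} := tr((A⊗B) Y_{ij}*). For each k set C_{i,k} := vec^{−1}(v_{i,k}) ∈ ℂ^{n×m} and 𝐫(k) := max{ rk X : X ∈ span_ℂ{C_{1,k}, …, C_{N,k}} }. Then for all nonzero A ∈ ℂ^{m×β} and B ∈ ℂ^{n×β}, one has AA* ⋆ BB* ≽ Σ_{k=1}^{α} (1/min(rk AA*, rk BB*, 𝐫(k))) · ρ_k ρ_k* ≽ 0, where ρ_k ∈ ℂ^N has entries (ρ_k)_i := v_{i,k}* vec(BA^T), and a summand with all v_{i,k} = 0 (so 𝐫(k) = 0 and ρ_k = 0) is interpreted as the zero matrix. -/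

import Mathlib

open Matrix Kronecker ComplexOrder

/-!
With `P = AA* ⊗ BB*` and `V_k` the matrix with columns `v_{1,k}, …, v_{N,k}`, the product
`AA* ⋆ BB*` is `∑_k V_k* P V_k`, so it suffices to compare each summand with the rank-one term.
For `x ∈ ℂ^N` the vector `V_k x` is `vec X` with `X = ∑ x_i C_{i,k}`, and for `M = AᵀX*B` one has
`x* (V_k* P V_k) x = ‖M‖_F²` and `x* ρ_k = tr M`. If `Q` is the orthogonal projection onto the
range of `M`, then `tr M = ⟨Q, M⟩_F` and `‖Q‖_F² = tr Q = rk M`, so Cauchy–Schwarz gives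
`|tr M|² ≤ rk M · ‖M‖_F²`; finally `rk M ≤ min(rk A, rk B, rk X) ≤ min(rk AA*, rk BB*, 𝐫(k))`.
-/

namespace Matrix

theorem rank_le_sSup_rank_of_mem {m n R : Type*} [Fintype n] [CommSemiring R]
    [StrongRankCondition R] {S : Set (Matrix m n R)} {X : Matrix m n R} (hX : X ∈ S) :
    X.rank ≤ sSup {t : ℕ | ∃ Y ∈ S, Y.rank = t} := by
  refine le_csSup ⟨Fintype.card n, ?_⟩ ⟨X, hX, rfl⟩
  rintro t ⟨Y, -, rfl⟩
  exact Y.rank_le_card_width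

variable {m n β : Type*} [Fintype m] [Fintype n] [Fintype β]

theorem IsIdempotentElem.trace_eq_rank [DecidableEq n] {K : Type*} [Field K]
    {Q : Matrix n n K} (hQ : IsIdempotentElem Q) : Q.trace = Q.rank := by
  have hQ' : IsIdempotentElem (toLin' Q) := hQ.map toLinAlgEquiv'
  rw [← trace_toLin'_eq, (LinearMap.IsIdempotentElem.isProj_range _ hQ').trace, toLin'_apply',
    rank]

section RCLike

variable {𝕜 : Type*} [RCLike 𝕜]

theorem norm_trace_conjTranspose_mul_sq_le (X Y : Matrix m n 𝕜) :
    ‖(Xᴴ * Y).trace‖ ^ 2 ≤ RCLike.re (Xᴴ * X).trace * RCLike.re (Yᴴ * Y).trace := by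
  have h := inner_mul_inner_self_le (𝕜 := 𝕜) (WithLp.toLp 2 (vec X)) (WithLp.toLp 2 (vec Y))
  simp only [EuclideanSpace.inner_eq_star_dotProduct, dotProduct_comm _ (star _),
    star_vec_dotProduct_vec] at h
  have hswap : (Yᴴ * X).trace = star (Xᴴ * Y).trace := by
    rw [← trace_conjTranspose, conjTranspose_mul, conjTranspose_conjTranspose]
  rwa [hswap, norm_star, ← sq] at h

theorem rank_transpose_mul_conjTranspose_mul_le (A : Matrix m β 𝕜) (X : Matrix n m 𝕜)
    (B : Matrix n β 𝕜) : (Aᵀ * Xᴴ * B).rank ≤ min (min A.rank B.rank) X.rank := by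
  refine le_min (le_min ?_ ?_) ?_
  · calc (Aᵀ * Xᴴ * B).rank ≤ Aᵀ.rank := by
          rw [Matrix.mul_assoc]; exact rank_mul_le_left _ _
      _ = A.rank := rank_transpose A
  · exact rank_mul_le_right _ _
  · calc (Aᵀ * Xᴴ * B).rank ≤ Xᴴ.rank := (rank_mul_le_left _ _).trans (rank_mul_le_right _ _)
      _ = X.rank := rank_conjTranspose X

variable [DecidableEq n]

theorem rank_eq_finrank_range_toEuclideanLin (M : Matrix n n 𝕜) :
    M.rank = Module.finrank 𝕜 (LinearMap.range (toEuclideanLin M)) := by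
  rw [rank_eq_finrank_range_toLin M (PiLp.basisFun 2 𝕜 n) (PiLp.basisFun 2 𝕜 n),
    ← toLpLin_eq_toLin]

theorem exists_isStarProjection_mul_eq_self (M : Matrix n n 𝕜) :
    ∃ Q : Matrix n n 𝕜, IsStarProjection Q ∧ Q * M = M ∧ Q.rank = M.rank := by
  set U := LinearMap.range (toEuclideanLin M)
  let e : Matrix n n 𝕜 ≃⋆ₐ[𝕜] (EuclideanSpace 𝕜 n →L[𝕜] EuclideanSpace 𝕜 n) := toEuclideanCLM
  refine ⟨e.symm U.starProjection, isStarProjection_starProjection.map e.symm, ?_, ?_⟩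
  · have hPM : U.starProjection * e M = e M := ContinuousLinearMap.ext fun x =>
      Submodule.starProjection_eq_self_iff.mpr (LinearMap.mem_range_self _ x)
    calc e.symm U.starProjection * M = e.symm (U.starProjection * e M) := by simp
      _ = M := by rw [hPM, e.symm_apply_apply]
  · rw [rank_eq_finrank_range_toEuclideanLin, rank_eq_finrank_range_toEuclideanLin,
      ← coe_toEuclideanCLM_eq_toEuclideanLin, e.apply_symm_apply,
      Submodule.range_starProjection]

theorem norm_trace_sq_le_rank_mul (M : Matrix n n 𝕜) :
    ‖M.trace‖ ^ 2 ≤ M.rank * RCLike.re (M * Mᴴ).trace := by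
  obtain ⟨Q, hQ, hQM, hrank⟩ := exists_isStarProjection_mul_eq_self M
  have hQH : Qᴴ = Q := hQ.isSelfAdjoint
  calc ‖M.trace‖ ^ 2 = ‖(Qᴴ * M).trace‖ ^ 2 := by rw [hQH, hQM]
    _ ≤ RCLike.re (Qᴴ * Q).trace * RCLike.re (Mᴴ * M).trace :=
      norm_trace_conjTranspose_mul_sq_le Q M
    _ = M.rank * RCLike.re (M * Mᴴ).trace := by
      rw [hQH, hQ.isIdempotentElem.eq, hQ.isIdempotentElem.trace_eq_rank, hrank, trace_mul_comm]
      simp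

end RCLike

section Kronecker

variable {R : Type*} [CommRing R] [StarRing R]

theorem star_vec_dotProduct_kronecker_mulVec_vec (A : Matrix m β R) (B : Matrix n β R)
    (X : Matrix n m R) :
    star (vec X) ⬝ᵥ ((A * Aᴴ) ⊗ₖ (B * Bᴴ)) *ᵥ vec X =
      ((Aᵀ * Xᴴ * B) * (Aᵀ * Xᴴ * B)ᴴ).trace := by
  rw [mul_kronecker_mul, ← mulVec_mulVec, kronecker_mulVec_vec, kronecker_mulVec_vec,
    star_vec_dotProduct_vec, ← Matrix.mul_assoc Xᴴ, trace_mul_comm]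
  simp only [conjTranspose_mul, conjTranspose_conjTranspose, Matrix.mul_assoc]
  rfl

theorem star_vec_dotProduct_vec_mul_transpose (A : Matrix m β R) (B : Matrix n β R)
    (X : Matrix n m R) :
    star (vec X) ⬝ᵥ vec (B * Aᵀ) = (Aᵀ * Xᴴ * B).trace := by
  rw [star_vec_dotProduct_vec, ← Matrix.mul_assoc, trace_mul_cycle]

end Kronecker

variable {ι κ : Type*} [Fintype ι]

theorem of_trace_mul_conjTranspose_sum_eq_sum {R : Type*} [CommSemiring R] [StarRing R]
    {α : Type*} [Fintype α] (P : Matrix ι ι R) (v : α → κ → ι → R) :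
    (of fun i j => (P * (of fun a b => ∑ k, v k i a * star (v k j b))ᴴ).trace) =
      ∑ k, (of fun a i => v k i a)ᴴ * P * of fun a i => v k i a := by
  ext i j
  simp only [of_apply, trace, diag, mul_apply, conjTranspose_apply, sum_apply, star_sum,
    star_mul', star_star, Finset.mul_sum, Finset.sum_mul]
  rw [Finset.sum_comm]
  conv_rhs => rw [Finset.sum_comm]; enter [2, b]; rw [Finset.sum_comm]
  exact Fintype.sum_congr _ _ fun b => Fintype.sum_congr _ _ fun a =>
    Fintype.sum_congr _ _ fun k => by ring

variable [Fintype κ]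

theorem posSemidef_inv_natCast_smul_vecMulVec_self_star (R : ℕ) (a : κ → ℂ) :
    ((R : ℂ)⁻¹ • vecMulVec a (star a)).PosSemidef :=
  (posSemidef_vecMulVec_self_star a).smul (by positivity)

theorem star_dotProduct_vecMulVec_mulVec (a x : κ → ℂ) :
    star x ⬝ᵥ vecMulVec a (star a) *ᵥ x = (‖star x ⬝ᵥ a‖ ^ 2 : ℝ) := by
  rw [vecMulVec_mulVec, dotProduct_smul, op_smul_eq_mul, star_dotProduct a x,
    Complex.ofReal_pow]
  exact Complex.mul_conj' _

theorem PosSemidef.conjTranspose_mul_mul_sub_inv_smul_vecMulVec {P : Matrix ι ι ℂ}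
    (hP : P.PosSemidef) (V : Matrix ι κ ℂ) (w : ι → ℂ) (R : ℕ)
    (h : ∀ x, ‖star (V *ᵥ x) ⬝ᵥ w‖ ^ 2 ≤ R * (star (V *ᵥ x) ⬝ᵥ P *ᵥ (V *ᵥ x)).re) :
    (Vᴴ * P * V - (R : ℂ)⁻¹ • vecMulVec (Vᴴ *ᵥ w) (star (Vᴴ *ᵥ w))).PosSemidef := by
  refine .of_dotProduct_mulVec_nonneg ((hP.conjTranspose_mul_mul_same V).isHermitian.sub
    (posSemidef_inv_natCast_smul_vecMulVec_self_star R _).isHermitian) fun x => ?_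
  have hquad : star x ⬝ᵥ (Vᴴ * P * V) *ᵥ x = star (V *ᵥ x) ⬝ᵥ P *ᵥ (V *ᵥ x) := by
    rw [← mulVec_mulVec, ← mulVec_mulVec, dotProduct_mulVec, ← star_mulVec]
  have hρ : star x ⬝ᵥ (Vᴴ *ᵥ w) = star (V *ᵥ x) ⬝ᵥ w := by
    rw [dotProduct_mulVec, ← star_mulVec]
  set q := star (V *ᵥ x) ⬝ᵥ P *ᵥ (V *ᵥ x)
  have hq : 0 ≤ q := hP.dotProduct_mulVec_nonneg _
  have hq_real : q = q.re := Complex.eq_re_of_ofReal_le (r := 0) (by simpa using hq)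
  have key : (R : ℝ)⁻¹ * ‖star (V *ᵥ x) ⬝ᵥ w‖ ^ 2 ≤ q.re := by
    rcases R.eq_zero_or_pos with hR | hR
    · simpa [hR] using (Complex.nonneg_iff.mp hq).1
    · exact (inv_mul_le_iff₀ (by exact_mod_cast hR)).mpr (h x)
  rw [sub_mulVec, dotProduct_sub, hquad, smul_mulVec, dotProduct_smul,
    star_dotProduct_vecMulVec_mulVec, hρ, hq_real]
  simpa using Complex.zero_le_real.mpr (sub_nonneg.mpr key)

end Matrix

theorem general_prod_lower_bound_general (m n N α β : ℕ)
    (v : Fin α → Fin N → Fin m × Fin n → ℂ)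
    (C : Fin α → Fin N → Matrix (Fin n) (Fin m) ℂ)
    (hC : ∀ k i p q, C k i p q = v k i (q, p))
    (r : Fin α → ℕ)
    (hr : ∀ k, r k =
      sSup {t : ℕ | ∃ X ∈ Submodule.span ℂ (Set.range (C k)), Matrix.rank X = t})
    (A : Matrix (Fin m) (Fin β) ℂ) (B : Matrix (Fin n) (Fin β) ℂ) :
    ((Matrix.of fun i j : Fin N =>
        Matrix.trace (((A * Aᴴ) ⊗ₖ (B * Bᴴ)) *
          (Matrix.of fun a b : Fin m × Fin n => ∑ k, v k i a * star (v k j b))ᴴ)) -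
      ∑ k : Fin α, (((min (min (A * Aᴴ).rank (B * Bᴴ).rank) (r k) : ℕ) : ℂ))⁻¹ •
        vecMulVec
          (fun i : Fin N => star (v k i) ⬝ᵥ (fun p : Fin m × Fin n => (B * Aᵀ) p.2 p.1))
          (star fun i : Fin N =>
            star (v k i) ⬝ᵥ (fun p : Fin m × Fin n => (B * Aᵀ) p.2 p.1))).PosSemidef ∧
    (∑ k : Fin α, (((min (min (A * Aᴴ).rank (B * Bᴴ).rank) (r k) : ℕ) : ℂ))⁻¹ •
        vecMulVec
          (fun i : Fin N => star (v k i) ⬝ᵥ (fun p : Fin m × Fin n => (B * Aᵀ) p.2 p.1))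
          (star fun i : Fin N =>
            star (v k i) ⬝ᵥ (fun p : Fin m × Fin n => (B * Aᵀ) p.2 p.1))).PosSemidef := by
  obtain rfl : v = fun k i => vec (C k i) := by
    funext k i ⟨q, p⟩
    exact (hC k i p q).symm
  refine ⟨?_, posSemidef_sum _ fun k _ => posSemidef_inv_natCast_smul_vecMulVec_self_star _ _⟩
  rw [of_trace_mul_conjTranspose_sum_eq_sum, ← Finset.sum_sub_distrib]
  refine posSemidef_sum _ fun k _ =>
    ((posSemidef_self_mul_conjTranspose A).kronecker (posSemidef_self_mul_conjTranspose B)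
      ).conjTranspose_mul_mul_sub_inv_smul_vecMulVec _ (vec (B * Aᵀ)) _ fun x => ?_
  set X := ∑ i, x i • C k i
  have hVx : (of fun a i => vec (C k i) a) *ᵥ x = vec X := by
    ext a
    simp [X, mulVec, dotProduct, Matrix.sum_apply, mul_comm]
  have hX : X.rank ≤ r k := hr k ▸ rank_le_sSup_rank_of_mem (Submodule.sum_mem _ fun i _ =>
    Submodule.smul_mem _ _ (Submodule.subset_span ⟨i, rfl⟩))
  rw [hVx, star_vec_dotProduct_vec_mul_transpose, star_vec_dotProduct_kronecker_mulVec_vec]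
  refine (norm_trace_sq_le_rank_mul _).trans (mul_le_mul_of_nonneg_right ?_ ?_)
  · rw [rank_self_mul_conjTranspose, rank_self_mul_conjTranspose]
    exact_mod_cast (rank_transpose_mul_conjTranspose_mul_le A X B).trans
      (min_le_min_left _ hX)
  · exact (Complex.nonneg_iff.mp (posSemidef_self_mul_conjTranspose _).trace_nonneg).1

/-- lower bound for a general product `⋆` given by
`Y_{ij} = Σ_{k=1}^α v_{i,k} v_{j,k}*`: for nonzero `A, B`,
`AA* ⋆ BB* ≽ Σ_k (1/min(rk AA*, rk BB*, 𝐫(k))) ρ_k ρ_k* ≽ 0`, where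
`(ρ_k)_i = v_{i,k}* vec(BAᵀ)`, `C_{i,k} = vec⁻¹(v_{i,k})` and
`𝐫(k) = max{rk X : X ∈ span{C_{1,k},…,C_{N,k}}}` (a summand with all
`v_{i,k} = 0` has `𝐫(k) = 0`, `ρ_k = 0` and is the zero matrix, matching the
Lean convention `(0 : ℂ)⁻¹ = 0`). -/
theorem general_prod_lower_bound (m n N α β : ℕ)
    (hm : 1 ≤ m) (hn : 1 ≤ n) (hN : 1 ≤ N) (hα : 1 ≤ α) (hβ : 1 ≤ β)
    (v : Fin α → Fin N → Fin m × Fin n → ℂ)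
    (C : Fin α → Fin N → Matrix (Fin n) (Fin m) ℂ)
    (hC : ∀ k i p q, C k i p q = v k i (q, p))
    (r : Fin α → ℕ)
    (hr : ∀ k, r k =
      sSup {t : ℕ | ∃ X ∈ Submodule.span ℂ (Set.range (C k)), Matrix.rank X = t})
    (A : Matrix (Fin m) (Fin β) ℂ) (B : Matrix (Fin n) (Fin β) ℂ)
    (hA : A ≠ 0) (hB : B ≠ 0) :
    ((Matrix.of fun i j : Fin N =>
        Matrix.trace (((A * Aᴴ) ⊗ₖ (B * Bᴴ)) *
          (Matrix.of fun a b : Fin m × Fin n => ∑ k, v k i a * star (v k j b))ᴴ)) -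
      ∑ k : Fin α, (((min (min (A * Aᴴ).rank (B * Bᴴ).rank) (r k) : ℕ) : ℂ))⁻¹ •
        vecMulVec
          (fun i : Fin N => star (v k i) ⬝ᵥ (fun p : Fin m × Fin n => (B * Aᵀ) p.2 p.1))
          (star fun i : Fin N =>
            star (v k i) ⬝ᵥ (fun p : Fin m × Fin n => (B * Aᵀ) p.2 p.1))).PosSemidef ∧
    (∑ k : Fin α, (((min (min (A * Aᴴ).rank (B * Bᴴ).rank) (r k) : ℕ) : ℂ))⁻¹ •
        vecMulVec
          (fun i : Fin N => star (v k i) ⬝ᵥ (fun p : Fin m × Fin n => (B * Aᵀ) p.2 p.1))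
          (star fun i : Fin N =>
            star (v k i) ⬝ᵥ (fun p : Fin m × Fin n => (B * Aᵀ) p.2 p.1))).PosSemidef :=
  general_prod_lower_bound_general m n N α β v C hC r hr A B
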